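/- For all h ≥ 1 and k ≥ 1, every deterministic k-way branching program of depth at most 2^h that solves the decision tree evaluation problem BT^h_2(k) is thrifty. -/

import Mathlib

/-! Framework: the tree evaluation problem and deterministic k-way branching programs.

The balanced binary tree of height `h` has nodes numbered heap-style `1, …, 2^h - 1`:
the root is node `1` and the children of node `i` are `2i` and `2i+1`.
Elements of `[k] = {1,…,k}` are represented by `Fin k` (the element `1 ∈ [k]`
corresponds to `(0 : Fin k)`). -/

/-- Node `i` is a leaf of the height-`h` balanced binary tree. -/
def IsLeafNode (h i : ℕ) : Prop := 2 ^ (h - 1) ≤ i ∧ i < 2 ^ h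

/-- Node `i` is an internal node of the height-`h` balanced binary tree. -/
def IsInternalNode (h i : ℕ) : Prop := 1 ≤ i ∧ i < 2 ^ (h - 1)

/-- An input to the height-`h` tree evaluation problem over `[k]`: a binary function on `[k]`
for each internal node and a value in `[k]` for each leaf (values at irrelevant indices
are ignored). -/
structure TEInput (h k : ℕ) where
  f : ℕ → Fin k → Fin k → Fin k
  leaf : ℕ → Fin k

/-- Auxiliary recursion (on fuel) computing node values. -/
def TEInput.valAux {h k : ℕ} (I : TEInput h k) : ℕ → ℕ → Fin k
  | 0, i => I.leaf i
  | m + 1, i =>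
      if 2 ^ (h - 1) ≤ i then I.leaf i
      else I.f i (I.valAux m (2 * i)) (I.valAux m (2 * i + 1))

/-- The value `v_i^I` of node `i`: the leaf value if `i` is a leaf, and
`f_i^I (v_{2i}^I, v_{2i+1}^I)` if `i` is an internal node. -/
def TEInput.val {h k : ℕ} (I : TEInput h k) (i : ℕ) : Fin k := I.valAux h i

/-- The input variables of the tree evaluation problem: one variable `f_i(a,b)` for each
internal node `i` and `a b ∈ [k]`, and one variable `l_i` for each leaf `i`. -/
inductive TEVar (h k : ℕ) where
  | internal (i : ℕ) (hi : IsInternalNode h i) (a b : Fin k) : TEVar h k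
  | leaf (i : ℕ) (hi : IsLeafNode h i) : TEVar h k

/-- The value of a variable under an input. -/
def TEInput.evalVar {h k : ℕ} (I : TEInput h k) : TEVar h k → Fin k
  | .internal i _ a b => I.f i a b
  | .leaf i _ => I.leaf i

/-- The node a variable belongs to. -/
def TEVar.node {h k : ℕ} : TEVar h k → ℕ
  | .internal i _ _ _ => i
  | .leaf i _ => i

/-- `X` is the thrifty `i` variable of input `I`: it is `f_i(v_{2i}^I, v_{2i+1}^I)`
if `i` is an internal node, and `l_i` if `i` is a leaf. -/
def IsThriftyVarOf {h k : ℕ} (I : TEInput h k) (i : ℕ) : TEVar h k → Prop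
  | .internal j _ a b => j = i ∧ a = I.val (2 * j) ∧ b = I.val (2 * j + 1)
  | .leaf j _ => j = i

/-- A deterministic `k`-way branching program with variables indexed by `V` and
output set `R`: a set of states (of cardinality `size`), a start state, each state
labeled either with a variable to query (non-output states, with `k` out-edges
labeled `1,…,k`) or with an output value (output sink states). -/
structure DetBP (V : Type) (k : ℕ) (R : Type) where
  size : ℕ
  start : Fin size
  label : Fin size → V ⊕ R
  next : Fin size → Fin k → Fin size

namespace DetBP

variable {V : Type} {k : ℕ} {R : Type}

/-- One step of computation on input `x`: from a state querying variable `v`, follow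
the out-edge labeled `x v`; output states are sinks. -/
def step (B : DetBP V k R) (x : V → Fin k) (s : Fin B.size) : Fin B.size :=
  match B.label s with
  | .inl v => B.next s (x v)
  | .inr _ => s

/-- The state of the computation path of `x` at time `t`. -/
def run (B : DetBP V k R) (x : V → Fin k) (t : ℕ) : Fin B.size :=
  (B.step x)^[t] B.start

/-- The depth of `B` is at most `D`: on every input, the computation path reaches an
output state within its first `D` states. -/
def DepthLE (B : DetBP V k R) (D : ℕ) : Prop :=
  ∀ x : V → Fin k, ∃ t < D, (B.label (B.run x t)).isRight = true

/-- `B` solves the function tree evaluation problem `FT^h_2(k)`: on every input `I`, the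
computation path ends in the output state labeled with the root value `v_1^I`. -/
def SolvesFT {h : ℕ} (B : DetBP (TEVar h k) k (Fin k)) : Prop :=
  ∀ I : TEInput h k, ∃ t, B.label (B.run I.evalVar t) = Sum.inr (I.val 1)

/-- `B` solves the decision tree evaluation problem `BT^h_2(k)`: on every input `I`, the
computation path ends in the output state labeled with whether `v_1^I = 1`
(the element `1 ∈ [k]` being `(0 : Fin k)`). -/
def SolvesBT {h : ℕ} (B : DetBP (TEVar h k) k Bool) : Prop :=
  ∀ I : TEInput h k, ∃ t, B.label (B.run I.evalVar t) = Sum.inr (decide ((I.val 1 : Fin k).val = 0))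

/-- `B` is thrifty: on every input `I`, every query `f_i(a,b)` made along the computation
path of `I` satisfies `a = v_{2i}^I` and `b = v_{2i+1}^I`. -/
def Thrifty {h : ℕ} (B : DetBP (TEVar h k) k R) : Prop :=
  ∀ (I : TEInput h k) (t i : ℕ) (hi : IsInternalNode h i) (a b : Fin k),
    B.label (B.run I.evalVar t) = Sum.inl (TEVar.internal i hi a b) →
    a = I.val (2 * i) ∧ b = I.val (2 * i + 1)

end DetBP

/-! Suppose the first non-thrifty query on the path of `I` is made at time `t₀`. Replace every
gate of `I` away from its thrifty point by one whose output bit (`= 1` or not) is the xor of the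
input bits up to a constant; this keeps all node values, hence the path up to `t₀`. The new input
`I'` halts within `2 ^ h - 1` steps and has already spent one of them on a non-thrifty query, so
the thrifty variable of some node `j` is never queried. Flipping the bit of that variable flips
the bit of node `j`, and the xor gates carry the flip up to the root without touching any queried
variable: the program gives the same answer on two inputs with different root bits. -/

/-- In heap numbering the ancestors of `p` are the `p / 2 ^ m`. -/
def InSubtree (i p : ℕ) : Prop := ∃ m, p / 2 ^ m = i

theorem inSubtree_self (i : ℕ) : InSubtree i i := ⟨0, by simp⟩

namespace InSubtree

variable {i p : ℕ}

theorem le (hp : InSubtree i p) : i ≤ p := by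
  obtain ⟨m, rfl⟩ := hp
  exact Nat.div_le_self _ _

theorem half (hp : InSubtree i p) : InSubtree (i / 2) p := by
  obtain ⟨m, rfl⟩ := hp
  exact ⟨m + 1, by rw [pow_succ, Nat.div_div_eq_div_mul]⟩

theorem of_left (hp : InSubtree (2 * i) p) : InSubtree i p := by
  simpa using hp.half

theorem of_right (hp : InSubtree (2 * i + 1) p) : InSubtree i p := by
  simpa [show (2 * i + 1) / 2 = i by omega] using hp.half

/-- Two children of the same node have disjoint subtrees. -/
theorem eq_of_div_two_eq {c s : ℕ} (hc : InSubtree c p) (hs : InSubtree s p)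
    (hsib : c / 2 = s / 2) (hpos : 1 ≤ c / 2) : c = s := by
  obtain ⟨m, rfl⟩ := hc
  obtain ⟨m', rfl⟩ := hs
  wlog hmm : m ≤ m' generalizing m m'
  · exact (this m' (hsib ▸ hpos) m hsib.symm (by omega)).symm
  obtain ⟨d, rfl⟩ := Nat.exists_eq_add_of_le hmm
  cases d with
  | zero => rfl
  | succ d =>
    have : p / 2 ^ (m + (d + 1)) ≤ p / 2 ^ m / 2 := by
      rw [pow_add, pow_succ', ← Nat.div_div_eq_div_mul, ← Nat.div_div_eq_div_mul]
      exact Nat.div_le_self _ _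
    omega

end InSubtree

theorem IsInternalNode.two_mul_add_one_lt {h i : ℕ} (hi : IsInternalNode h i) :
    2 * i + 1 < 2 ^ h := by
  obtain ⟨hi1, hi2⟩ := hi
  cases h with
  | zero => simp at hi2; omega
  | succ h => rw [pow_succ]; simp at hi2; omega

theorem node_induction {h : ℕ} {P : ℕ → Prop} (leaf : ∀ i, IsLeafNode h i → P i)
    (internal : ∀ i, IsInternalNode h i → P (2 * i) → P (2 * i + 1) → P i) :
    ∀ i, 1 ≤ i → i < 2 ^ h → P i := by
  intro i hi1 hi2
  by_cases hleaf : 2 ^ (h - 1) ≤ i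
  · exact leaf i ⟨hleaf, hi2⟩
  · have hi : IsInternalNode h i := ⟨hi1, by omega⟩
    have := hi.two_mul_add_one_lt
    exact internal i hi (node_induction leaf internal (2 * i) (by omega) (by omega))
      (node_induction leaf internal (2 * i + 1) (by omega) (by omega))
termination_by i => 2 ^ h - i

namespace TEInput

variable {h k : ℕ}

theorem valAux_succ (I : TEInput h k) (m i : ℕ) :
    I.valAux (m + 1) i =
      if 2 ^ (h - 1) ≤ i then I.leaf i else I.f i (I.valAux m (2 * i)) (I.valAux m (2 * i + 1)) :=
  rfl

theorem valAux_succ_of_le (I : TEInput h k) :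
    ∀ {m i : ℕ}, 2 ^ (h - 1) ≤ i * 2 ^ m → I.valAux (m + 1) i = I.valAux m i
  | 0, i, hi => by simp_all [valAux]
  | m + 1, i, hi => by
    rw [valAux_succ I (m + 1) i, valAux_succ I m i]
    split_ifs
    · rfl
    · rw [valAux_succ_of_le I (i := 2 * i) (by rw [pow_succ] at hi; linarith),
        valAux_succ_of_le I (i := 2 * i + 1) (by rw [pow_succ] at hi; nlinarith)]

theorem val_eq_leaf (I : TEInput h k) {i : ℕ} (hi : 2 ^ (h - 1) ≤ i) : I.val i = I.leaf i := by
  cases h with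
  | zero => rfl
  | succ h => simp_all [val, valAux]

theorem val_eq_f (I : TEInput h k) {i : ℕ} (hi : IsInternalNode h i) :
    I.val i = I.f i (I.val (2 * i)) (I.val (2 * i + 1)) := by
  obtain ⟨hi1, hi2⟩ := hi
  cases h with
  | zero => simp at hi2; omega
  | succ h =>
    simp only [Nat.add_sub_cancel] at hi2
    have hchild (c : ℕ) (hc : 1 ≤ c) : I.valAux (h + 1) c = I.valAux h c :=
      I.valAux_succ_of_le (by simpa using Nat.le_mul_of_pos_left (2 ^ h) hc)
    rw [val, valAux_succ, Nat.add_sub_cancel, if_neg (not_le.mpr hi2), val, val,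
      hchild _ (by omega), hchild _ (by omega)]

theorem val_eq_of_agree_on_subtree {I J : TEInput h k} {i : ℕ} (hi1 : 1 ≤ i) (hi2 : i < 2 ^ h)
    (hagree : ∀ p, InSubtree i p → J.f p = I.f p ∧ J.leaf p = I.leaf p) : J.val i = I.val i := by
  revert hagree
  refine node_induction (P := fun i => (∀ p, InSubtree i p → J.f p = I.f p ∧ J.leaf p = I.leaf p) →
    J.val i = I.val i) (fun i hi hagree => ?_) (fun i hi hl hr hagree => ?_) i hi1 hi2
  · rw [J.val_eq_leaf hi.1, I.val_eq_leaf hi.1, (hagree i (inSubtree_self i)).2]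
  · rw [J.val_eq_f hi, I.val_eq_f hi, (hagree i (inSubtree_self i)).1,
      hl fun p hp => hagree p hp.of_left, hr fun p hp => hagree p hp.of_right]

theorem val_eq_of_evalVar_eq {I J : TEInput h k}
    (hJ : ∀ j v, IsThriftyVarOf I j v → J.evalVar v = I.evalVar v) :
    ∀ i, 1 ≤ i → i < 2 ^ h → J.val i = I.val i := by
  refine node_induction (fun i hi => ?_) (fun i hi hl hr => ?_)
  · rw [J.val_eq_leaf hi.1, I.val_eq_leaf hi.1]
    exact hJ i (.leaf i hi) rfl
  · rw [J.val_eq_f hi, I.val_eq_f hi, hl, hr]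
    exact hJ i (.internal i hi _ _) ⟨rfl, rfl, rfl⟩

end TEInput

theorem IsThriftyVarOf.node_eq {h k : ℕ} {I : TEInput h k} {j : ℕ} {v : TEVar h k}
    (hv : IsThriftyVarOf I j v) : v.node = j := by
  cases v with
  | internal => exact hv.1
  | leaf => exact hv

theorem isThriftyVarOf_congr {h k : ℕ} {I J : TEInput h k}
    (hval : ∀ i, 1 ≤ i → i < 2 ^ h → J.val i = I.val i) {j : ℕ} {v : TEVar h k} :
    IsThriftyVarOf J j v ↔ IsThriftyVarOf I j v := by
  cases v with
  | internal i hi =>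
    have := hi.two_mul_add_one_lt
    simp only [IsThriftyVarOf, hval (2 * i) (by have := hi.1; omega) (by omega),
      hval (2 * i + 1) (by omega) this]
  | leaf => rfl

def isOne {k : ℕ} (x : Fin k) : Bool := decide (x.val = 0)

def ofIsOne {k : ℕ} (hk : 2 ≤ k) (b : Bool) : Fin k := if b then ⟨0, by omega⟩ else ⟨1, hk⟩

@[simp]
theorem isOne_ofIsOne {k : ℕ} (hk : 2 ≤ k) (b : Bool) : isOne (ofIsOne hk b) = b := by
  cases b <;> simp [isOne, ofIsOne]

namespace TEInput

variable {h k : ℕ}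

def HasXorGates (I : TEInput h k) : Prop :=
  ∀ p, IsInternalNode h p → ∃ κ : Bool, ∀ c w, isOne (I.f p c w) = (isOne c ^^ isOne w ^^ κ)

section Propagation

variable {I J : TEInput h k}

theorem isOne_val_half_ne (hI : I.HasXorGates) {c : ℕ} (hc2 : 2 ≤ c) (hc : c < 2 ^ h)
    (hagree : ∀ p, ¬ InSubtree c p → J.f p = I.f p ∧ J.leaf p = I.leaf p)
    (hne : isOne (J.val c) ≠ isOne (I.val c)) :
    isOne (J.val (c / 2)) ≠ isOne (I.val (c / 2)) := by
  have hq : IsInternalNode h (c / 2) := by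
    refine ⟨by omega, ?_⟩
    cases h with
    | zero => simp at hc; omega
    | succ h => rw [pow_succ] at hc; simp; omega
  obtain ⟨κ, hκ⟩ := hI _ hq
  have hfq : J.f (c / 2) = I.f (c / 2) := (hagree _ fun hp => by have := hp.le; omega).1
  have := hq.two_mul_add_one_lt
  have hsib (s : ℕ) (hs : s / 2 = c / 2) (hsc : s ≠ c) (hs2 : s < 2 ^ h) : J.val s = I.val s :=
    val_eq_of_agree_on_subtree (by omega) hs2 fun p hp =>
      hagree p fun hcp => hsc (hp.eq_of_div_two_eq hcp hs (by omega))
  rw [J.val_eq_f hq, I.val_eq_f hq, hfq, hκ, hκ]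
  obtain hc' | hc' : c = 2 * (c / 2) ∨ c = 2 * (c / 2) + 1 := by omega
  · rw [hsib (2 * (c / 2) + 1) (by omega) (by omega) this, ← hc']
    simpa using hne
  · rw [hsib (2 * (c / 2)) (by omega) (by omega) (by omega), ← hc']
    simpa using hne

theorem isOne_val_one_ne (hI : I.HasXorGates) :
    ∀ c, 1 ≤ c → c < 2 ^ h → (∀ p, ¬ InSubtree c p → J.f p = I.f p ∧ J.leaf p = I.leaf p) →
      isOne (J.val c) ≠ isOne (I.val c) → isOne (J.val 1) ≠ isOne (I.val 1)
  | c, hc1, hc, hagree, hne => by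
    obtain rfl | hc2 := eq_or_lt_of_le hc1
    · exact hne
    · exact isOne_val_one_ne hI (c / 2) (by omega) (by omega)
        (fun p hp => hagree p fun hcp => hp hcp.half) (isOne_val_half_ne hI hc2 hc hagree hne)

end Propagation

section Modifications

variable (hk : 2 ≤ k) (I : TEInput h k)

/-- Keeps the node values of `I`, while the bit of every node can be steered from either child. -/
def xorize : TEInput h k where
  f p c w :=
    if c = I.val (2 * p) ∧ w = I.val (2 * p + 1) then I.val p
    else ofIsOne hk (isOne c ^^ isOne w ^^
      (isOne (I.val (2 * p)) ^^ isOne (I.val (2 * p + 1)) ^^ isOne (I.val p)))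
  leaf := I.leaf

theorem hasXorGates_xorize : (I.xorize hk).HasXorGates := fun p _ =>
  ⟨isOne (I.val (2 * p)) ^^ isOne (I.val (2 * p + 1)) ^^ isOne (I.val p), fun c w => by
    simp only [xorize]
    split_ifs with hcw
    · obtain ⟨rfl, rfl⟩ := hcw
      cases isOne (I.val (2 * p)) <;> cases isOne (I.val (2 * p + 1)) <;> simp
    · simp⟩

theorem evalVar_xorize {j : ℕ} {v : TEVar h k} (hv : IsThriftyVarOf I j v) :
    (I.xorize hk).evalVar v = I.evalVar v := by
  cases v with
  | internal i hi a b =>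
    obtain ⟨-, rfl, rfl⟩ := hv
    simp [xorize, evalVar, ← I.val_eq_f hi]
  | leaf => rfl

theorem val_xorize : ∀ i, 1 ≤ i → i < 2 ^ h → (I.xorize hk).val i = I.val i :=
  val_eq_of_evalVar_eq fun _ _ hv => I.evalVar_xorize hk hv

/-- Both `f j` and `leaf j` are changed: only the one that is a variable of node `j` matters. -/
def flipThrifty (j : ℕ) : TEInput h k where
  f := Function.update I.f j fun c w =>
    if c = I.val (2 * j) ∧ w = I.val (2 * j + 1) then ofIsOne hk (!isOne (I.val j)) else I.f j c w
  leaf := Function.update I.leaf j (ofIsOne hk (!isOne (I.leaf j)))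

variable {j : ℕ}

theorem flipThrifty_agree {p : ℕ} (hp : p ≠ j) :
    (I.flipThrifty hk j).f p = I.f p ∧ (I.flipThrifty hk j).leaf p = I.leaf p :=
  ⟨Function.update_of_ne hp _ _, Function.update_of_ne hp _ _⟩

theorem evalVar_flipThrifty {v : TEVar h k} (hv : ¬ IsThriftyVarOf I j v) :
    (I.flipThrifty hk j).evalVar v = I.evalVar v := by
  cases v with
  | internal i hi a b =>
    by_cases hij : i = j
    · subst hij
      simp only [evalVar, flipThrifty, Function.update_self]
      exact if_neg fun hab => hv ⟨rfl, hab⟩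
    · exact congrFun (congrFun (I.flipThrifty_agree hk hij).1 a) b
  | leaf i hi => exact (I.flipThrifty_agree hk hv).2

theorem isOne_val_flipThrifty_ne (hj1 : 1 ≤ j) :
    isOne ((I.flipThrifty hk j).val j) ≠ isOne (I.val j) := by
  by_cases hleaf : 2 ^ (h - 1) ≤ j
  · rw [val_eq_leaf _ hleaf, val_eq_leaf _ hleaf]
    simp [flipThrifty]
  · have hj : IsInternalNode h j := ⟨hj1, by omega⟩
    have hchild (c : ℕ) (hc : j < c) (hc2 : c < 2 ^ h) : (I.flipThrifty hk j).val c = I.val c :=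
      val_eq_of_agree_on_subtree (by omega) hc2 fun p hp =>
        I.flipThrifty_agree hk (by have := hp.le; omega)
    have := hj.two_mul_add_one_lt
    rw [val_eq_f _ hj, hchild _ (by omega) (by omega), hchild _ (by omega) this]
    simp [flipThrifty]

end Modifications

end TEInput

namespace DetBP

variable {V : Type} {k : ℕ} {R : Type} (B : DetBP V k R)

theorem run_succ (x : V → Fin k) (t : ℕ) : B.run x (t + 1) = B.step x (B.run x t) :=
  Function.iterate_succ_apply' _ _ _

theorem run_congr {x y : V → Fin k} {t : ℕ}
    (hxy : ∀ τ < t, ∀ v, B.label (B.run x τ) = .inl v → y v = x v) :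
    ∀ τ ≤ t, B.run y τ = B.run x τ
  | 0, _ => rfl
  | τ + 1, hτ => by
    rw [run_succ, run_succ, run_congr hxy τ (by omega), step, step]
    split
    · next v hv => rw [hxy τ (by omega) v hv]
    · rfl

theorem run_eq_of_label_eq_inr {x : V → Fin k} {T : ℕ} {r : R}
    (hT : B.label (B.run x T) = .inr r) {t : ℕ} (ht : T ≤ t) : B.run x t = B.run x T := by
  induction t, ht using Nat.le_induction with
  | base => rfl
  | succ t _ ih => rw [run_succ, ih, step, hT]

theorem lt_of_label_eq_inl {x : V → Fin k} {t T : ℕ} {v : V} {r : R}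
    (ht : B.label (B.run x t) = .inl v) (hT : B.label (B.run x T) = .inr r) : t < T := by
  by_contra! hle
  rw [B.run_eq_of_label_eq_inr hT hle, hT] at ht
  cases ht

theorem output_eq_of_agree {x y : V → Fin k} {T t : ℕ} {r r' : R}
    (hx : B.label (B.run x T) = .inr r) (hy : B.label (B.run y t) = .inr r')
    (hxy : ∀ τ < T, ∀ v, B.label (B.run x τ) = .inl v → y v = x v) : r' = r := by
  have hyT : B.run y T = B.run x T := B.run_congr hxy T le_rfl
  rcases le_total T t with hTt | htT
  · rw [B.run_eq_of_label_eq_inr (hyT ▸ hx) hTt, hyT, hx] at hy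
    exact (Sum.inr.inj hy).symm
  · rw [← hyT, B.run_eq_of_label_eq_inr hy htT, hy] at hx
    exact Sum.inr.inj hx

section TreeEvaluation

variable {h : ℕ} (B : DetBP (TEVar h k) k R)

theorem exists_thriftyVar_not_queried (I : TEInput h k) {T t₀ : ℕ} {v₀ : TEVar h k}
    (hT : T < 2 ^ h) (ht₀ : t₀ < T) (hv₀ : B.label (B.run I.evalVar t₀) = .inl v₀)
    (hbad : ∀ j, ¬ IsThriftyVarOf I j v₀) :
    ∃ j, 1 ≤ j ∧ j < 2 ^ h ∧
      ∀ τ < T, ∀ v, B.label (B.run I.evalVar τ) = .inl v → ¬ IsThriftyVarOf I j v := by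
  by_contra! hall
  choose! τ hτ hvτ using hall
  have hmaps : ∀ j ∈ Finset.Ico 1 (2 ^ h), τ j ∈ (Finset.range T).erase t₀ := by
    intro j hj
    rw [Finset.mem_Ico] at hj
    obtain ⟨v, hv, hthr⟩ := hvτ j hj.1 hj.2
    refine Finset.mem_erase.mpr ⟨fun he => hbad j ?_, Finset.mem_range.mpr (hτ j hj.1 hj.2)⟩
    rw [he, hv₀, Sum.inl.injEq] at hv
    rwa [hv]
  have hinj : Set.InjOn τ (Finset.Ico 1 (2 ^ h)) := by
    intro j hj j' hj' he
    simp only [Finset.coe_Ico, Set.mem_Ico] at hj hj'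
    obtain ⟨v, hv, hthr⟩ := hvτ j hj.1 hj.2
    obtain ⟨v', hv', hthr'⟩ := hvτ j' hj'.1 hj'.2
    rw [he, hv', Sum.inl.injEq] at hv
    rw [← hthr.node_eq, ← hthr'.node_eq, hv]
  have hcard := Finset.card_le_card_of_injOn τ hmaps hinj
  rw [Nat.card_Ico, Finset.card_erase_of_mem (Finset.mem_range.mpr ht₀), Finset.card_range] at hcard
  omega

end TreeEvaluation

end DetBP

theorem DetBP.not_solvesBT_of_first_nonthrifty_query {h k : ℕ} (hk : 2 ≤ k)
    {B : DetBP (TEVar h k) k Bool} (hdepth : B.DepthLE (2 ^ h)) {I : TEInput h k} {t₀ : ℕ}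
    {v₀ : TEVar h k} (hv₀ : B.label (B.run I.evalVar t₀) = .inl v₀)
    (hbad : ∀ j, ¬ IsThriftyVarOf I j v₀)
    (hfirst : ∀ τ < t₀, ∀ v, B.label (B.run I.evalVar τ) = .inl v → ∃ j, IsThriftyVarOf I j v) :
    ¬ B.SolvesBT := by
  intro hB
  set I' := I.xorize hk
  have hrun : B.run I'.evalVar t₀ = B.run I.evalVar t₀ :=
    B.run_congr (fun τ hτ v hv => (hfirst τ hτ v hv).elim fun _ hj => I.evalVar_xorize hk hj)
      t₀ le_rfl
  obtain ⟨T, hT, hout⟩ := hdepth I'.evalVar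
  obtain ⟨r, hr⟩ := Sum.isRight_iff.mp hout
  rw [← hrun] at hv₀
  obtain ⟨j, hj1, hj2, hunqueried⟩ := B.exists_thriftyVar_not_queried I' hT
    (B.lt_of_label_eq_inl hv₀ hr) hv₀
    fun j hj => hbad j ((isThriftyVarOf_congr (I.val_xorize hk)).mp hj)
  set J := I'.flipThrifty hk j
  have hbit : isOne (J.val 1) ≠ isOne (I'.val 1) :=
    TEInput.isOne_val_one_ne (I.hasXorGates_xorize hk) j hj1 hj2
      (fun p hp => I'.flipThrifty_agree hk fun hpj => hp (hpj ▸ inSubtree_self j))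
      (I'.isOne_val_flipThrifty_ne hk hj1)
  obtain ⟨tJ, htJ⟩ := hB J
  obtain ⟨tI, htI⟩ := hB I'
  exact hbit ((B.output_eq_of_agree hr htJ fun τ hτ v hv =>
    I'.evalVar_flipThrifty hk (hunqueried τ hτ v hv)).trans
    (B.output_eq_of_agree hr htI fun _ _ _ _ => rfl).symm)

theorem stmt_2_general (h k : ℕ) (B : DetBP (TEVar h k) k Bool)
    (hB : B.SolvesBT) (hdepth : B.DepthLE (2 ^ h)) : B.Thrifty := by
  classical
  intro I t i hi a b hq
  by_contra hab
  obtain hk | hk := lt_or_ge k 2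
  · have : Subsingleton (Fin k) := Fin.subsingleton_iff_le_one.mpr (by omega)
    exact hab ⟨Subsingleton.elim _ _, Subsingleton.elim _ _⟩
  have hex : ∃ t, ∃ v, B.label (B.run I.evalVar t) = .inl v ∧ ∀ j, ¬ IsThriftyVarOf I j v :=
    ⟨t, _, hq, fun _ hj => hab hj.2⟩
  obtain ⟨v₀, hv₀, hbad⟩ := Nat.find_spec hex
  refine B.not_solvesBT_of_first_nonthrifty_query hk hdepth hv₀ hbad (fun τ hτ v hv => ?_) hB
  by_contra! hnot
  exact Nat.find_min hex hτ ⟨v, hv, hnot⟩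

/-- For all `h ≥ 1` and `k ≥ 1`, every deterministic `k`-way branching program
of depth at most `2^h` that solves `BT^h_2(k)` is thrifty. -/
theorem stmt_2 (h k : ℕ) (hh : 1 ≤ h) (hk : 1 ≤ k) (B : DetBP (TEVar h k) k Bool)
    (hB : B.SolvesBT) (hdepth : B.DepthLE (2 ^ h)) : B.Thrifty :=
  stmt_2_general h k B hB hdepth
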